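/- Let $\rho_{\tilde{\mathcal{R}}}$ be the canonical extension of a normalised, finite, continuous-from-above risk measure $\rho_{\mathcal{R}}$ to the Minkowski domain $L^{\mathcal{R}}$, and define $\xi(X) := \sup_{m \in \mathbb{N}} \inf_{n \in \mathbb{N}} \rho_{\mathcal{R}}((-n) \vee X \wedge m)$ for $X \in L^{\mathcal{R}}$ (well-defined since $(-n) \vee X \wedge m \in L^{\infty}_{\mathbb{P}}$). Then $\rho_{\tilde{\mathcal{R}}}(X) = \xi(X)$ for all $X \in L^{\mathcal{R}}$. -/

import Mathlib

/-!
Statement 15 (Theorem mainresult): the canonical extension `ρ̃` of a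
normalised, finite, continuous-from-above risk measure to the Minkowski domain
coincides with `ξ(X) = sup_m inf_n ρ((-n) ∨ X ∧ m)`.
-/

open MeasureTheory

def BM (Ω : Type*) [MeasurableSpace Ω] : Submodule ℝ (Ω → ℝ) where
  carrier := {f | Measurable f ∧ ∃ C : ℝ, ∀ ω, |f ω| ≤ C}
  add_mem' := by
    rintro f g ⟨hf, Cf, hCf⟩ ⟨hg, Cg, hCg⟩
    exact ⟨hf.add hg, Cf + Cg, fun ω =>
      (abs_add_le _ _).trans (add_le_add (hCf ω) (hCg ω))⟩
  zero_mem' := ⟨measurable_const, 0, fun ω => by simp⟩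
  smul_mem' := by
    rintro c f ⟨hf, Cf, hCf⟩
    refine ⟨hf.const_smul c, |c| * Cf, fun ω => ?_⟩
    have h : |(c • f) ω| = |c| * |f ω| := by simp [abs_mul]
    rw [h]
    exact mul_le_mul_of_nonneg_left (hCf ω) (abs_nonneg c)

variable {Ω : Type*} [MeasurableSpace Ω]

noncomputable instance : PartialOrder (BM Ω) :=
  PartialOrder.lift (fun f => (f : Ω → ℝ)) Subtype.coe_injective

/-- The conjugate `ρ*` of `ρ` at a (countably additive) measure. -/
noncomputable def rstarM (ρ : BM Ω → ℝ) (ν : Measure Ω) : EReal :=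
  ⨆ X : BM Ω, ((∫ ω, (X : Ω → ℝ) ω ∂ν - ρ X : ℝ) : EReal)

/-- The truncation `(-n) ∨ X ∧ m` as an element of `L^∞`. -/
noncomputable def truncBM (X : Ω → ℝ) (hX : Measurable X) (n m : ℕ) : BM Ω :=
  ⟨fun ω => max (-(n : ℝ)) (min (X ω) (m : ℝ)),
    measurable_const.max (hX.min measurable_const),
    (n : ℝ) + (m : ℝ), fun ω => by
      have hn : (0 : ℝ) ≤ (n : ℝ) := Nat.cast_nonneg n
      have hm : (0 : ℝ) ≤ (m : ℝ) := Nat.cast_nonneg m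
      refine abs_le.mpr ⟨?_, ?_⟩
      · exact le_trans (by linarith) (le_max_left _ _)
      · exact max_le (by linarith) (le_trans (min_le_right _ _) (by linarith))⟩

/-- The weak embedding of measures, realising `σ(ca_ℙ, L^∞_ℙ)`. -/
noncomputable def weakEmbed (μ : Measure Ω) : BM Ω → ℝ :=
  fun X => ∫ ω, (X : Ω → ℝ) ω ∂μ

/-- The canonical extension of `ρ` to the Minkowski domain. -/
noncomputable def rhoTilde (ρ : BM Ω → ℝ) (X : Ω → ℝ) : EReal :=
  ⨆ ν ∈ {ν : Measure Ω | rstarM ρ ν ≠ ⊤},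
    (((∫ ω, X ω ∂ν : ℝ) : EReal) - rstarM ρ ν)

section Aux

variable {Ω : Type*} [MeasurableSpace Ω]

lemma BM.le_iff {f g : BM Ω} : f ≤ g ↔ ∀ ω, (f : Ω → ℝ) ω ≤ (g : Ω → ℝ) ω :=
  Iff.rfl

lemma BM.measurable' (Z : BM Ω) : Measurable (Z : Ω → ℝ) := Z.2.1

lemma BM.exists_bound (Z : BM Ω) : ∃ C : ℝ, 0 ≤ C ∧ ∀ ω, |(Z : Ω → ℝ) ω| ≤ C := by
  obtain ⟨C, hC⟩ := Z.2.2
  exact ⟨max C 0, le_max_right _ _, fun ω => (hC ω).trans (le_max_left _ _)⟩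

lemma BM.integrable (Z : BM Ω) (μ : Measure Ω) [IsFiniteMeasure μ] :
    Integrable (Z : Ω → ℝ) μ := by
  obtain ⟨C, _, hC⟩ := BM.exists_bound Z
  exact (integrable_const C).mono' (BM.measurable' Z).aestronglyMeasurable
    (Filter.Eventually.of_forall fun ω => by simpa using hC ω)

/-- indicator of a measurable set as an element of `BM`. -/
noncomputable def indBM (A : Set Ω) (hA : MeasurableSet A) : BM Ω :=
  ⟨A.indicator (fun _ => (1 : ℝ)), measurable_const.indicator hA, 1, fun ω => by
    by_cases h : ω ∈ A <;> simp [Set.indicator_apply, h]⟩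

/-- constant functions as elements of `BM`. -/
noncomputable def constBM (c : ℝ) : BM Ω :=
  ⟨fun _ => c, measurable_const, |c|, fun _ => le_refl _⟩

end Aux
section Slope

variable {Ω : Type*} [MeasurableSpace Ω]
variable {ρ : BM Ω → ℝ}
variable (hconv : ∀ X Y : BM Ω, ∀ t : ℝ, 0 ≤ t → t ≤ 1 →
      ρ (t • X + (1 - t) • Y) ≤ t * ρ X + (1 - t) * ρ Y)

/-- difference quotient of `ρ` at `Y` in direction `Z`. -/
noncomputable def slopeQ (ρ : BM Ω → ℝ) (Y Z : BM Ω) (t : ℝ) : ℝ :=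
  (ρ (Y + t • Z) - ρ Y) / t

include hconv in
lemma slopeQ_mono (Y Z : BM Ω) {t s : ℝ} (ht : 0 < t) (hts : t ≤ s) :
    slopeQ ρ Y Z t ≤ slopeQ ρ Y Z s := by
  have hs : 0 < s := lt_of_lt_of_le ht hts
  have hid : (t/s) • (Y + s • Z) + (1 - t/s) • Y = Y + t • Z := by
    apply Subtype.ext
    have : ((t/s) • (Y + s • Z) + (1 - t/s) • Y : BM Ω).1
        = (t/s) • ((Y : Ω → ℝ) + s • (Z : Ω → ℝ)) + (1 - t/s) • (Y : Ω → ℝ) := by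
      simp
    rw [this]
    funext ω
    simp only [Pi.add_apply, Pi.smul_apply, smul_eq_mul, Submodule.coe_add,
      SetLike.val_smul]
    field_simp
    ring
  have h := hconv (Y + s • Z) Y (t/s) (by positivity) (by
    rw [div_le_one hs]; exact hts)
  rw [hid] at h
  unfold slopeQ
  rw [div_le_div_iff₀ ht hs]
  calc (ρ (Y + t • Z) - ρ Y) * s
      ≤ (t / s * ρ (Y + s • Z) + (1 - t / s) * ρ Y - ρ Y) * s :=
        mul_le_mul_of_nonneg_right (by linarith) hs.le
    _ = (ρ (Y + s • Z) - ρ Y) * t := by field_simp; ring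

include hconv in
lemma slopeQ_lb (Y Z : BM Ω) {t : ℝ} (ht : 0 < t) :
    ρ Y - ρ (Y - Z) ≤ slopeQ ρ Y Z t := by
  have h1t : (0:ℝ) < 1 + t := by linarith
  have hid : (1/(1+t)) • (Y + t • Z) + (1 - 1/(1+t)) • (Y - Z) = Y := by
    apply Subtype.ext
    have : ((1/(1+t)) • (Y + t • Z) + (1 - 1/(1+t)) • (Y - Z) : BM Ω).1
        = (1/(1+t)) • ((Y : Ω → ℝ) + t • (Z : Ω → ℝ))
          + (1 - 1/(1+t)) • ((Y : Ω → ℝ) - (Z : Ω → ℝ)) := by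
      simp
    rw [this]
    funext ω
    simp only [Pi.add_apply, Pi.smul_apply, smul_eq_mul, Pi.sub_apply]
    field_simp
    ring
  have h := hconv (Y + t • Z) (Y - Z) (1/(1+t))
    (by positivity) (by rw [div_le_one h1t]; linarith)
  rw [hid] at h
  unfold slopeQ
  rw [le_div_iff₀ ht]
  have e1 : (1:ℝ) - 1/(1+t) = t/(1+t) := by field_simp; ring
  rw [e1] at h
  have h2 : (1+t) * ρ Y ≤ ρ (Y + t • Z) + t * ρ (Y - Z) := by
    have := mul_le_mul_of_nonneg_left h (le_of_lt h1t)
    calc (1+t) * ρ Y ≤ (1+t) * (1/(1+t) * ρ (Y + t • Z) + t/(1+t) * ρ (Y - Z)) := by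
          exact mul_le_mul_of_nonneg_left h (le_of_lt h1t)
      _ = ρ (Y + t • Z) + t * ρ (Y - Z) := by field_simp
  nlinarith
/-- one-sided directional derivative (as inf of slopes). -/
noncomputable def pfun (ρ : BM Ω → ℝ) (Y Z : BM Ω) : ℝ :=
  ⨅ t : {t : ℝ // 0 < t}, slopeQ ρ Y Z t.1

include hconv in
lemma pfun_bddBelow (Y Z : BM Ω) :
    BddBelow (Set.range fun t : {t : ℝ // 0 < t} => slopeQ ρ Y Z t.1) := by
  refine ⟨ρ Y - ρ (Y - Z), ?_⟩
  rintro x ⟨t, rfl⟩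
  exact slopeQ_lb hconv Y Z t.2

include hconv in
lemma pfun_le_slopeQ (Y Z : BM Ω) {t : ℝ} (ht : 0 < t) :
    pfun ρ Y Z ≤ slopeQ ρ Y Z t :=
  ciInf_le (pfun_bddBelow hconv Y Z) ⟨t, ht⟩

include hconv in
lemma pfun_le (Y Z : BM Ω) : pfun ρ Y Z ≤ ρ (Y + Z) - ρ Y := by
  have := pfun_le_slopeQ hconv Y Z one_pos
  simpa [slopeQ] using this

lemma pfun_zero (Y : BM Ω) : pfun ρ Y 0 = 0 := by
  have : ∀ t : {t : ℝ // 0 < t}, slopeQ ρ Y (0 : BM Ω) t.1 = 0 := by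
    intro t; simp [slopeQ]
  unfold pfun
  simp only [this]
  exact ciInf_const

include hconv in
lemma pfun_smul (Y Z : BM Ω) {c : ℝ} (hc : 0 < c) :
    pfun ρ Y (c • Z) = c * pfun ρ Y Z := by
  have key : ∀ t : ℝ, 0 < t → slopeQ ρ Y (c • Z) t = c * slopeQ ρ Y Z (t * c) := by
    intro t ht
    unfold slopeQ
    rw [smul_smul]
    field_simp
  apply le_antisymm
  · have h3 : pfun ρ Y (c • Z) / c ≤ pfun ρ Y Z := by
      apply le_ciInf
      rintro ⟨s, hs⟩
      have h1 : pfun ρ Y (c • Z) ≤ slopeQ ρ Y (c • Z) (s / c) :=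
        pfun_le_slopeQ hconv Y _ (by positivity)
      have h2 : slopeQ ρ Y (c • Z) (s / c) = c * slopeQ ρ Y Z s := by
        rw [key _ (by positivity)]
        congr 2
        field_simp
      rw [h2] at h1
      rw [div_le_iff₀' hc]
      exact h1
    calc pfun ρ Y (c • Z) = c * (pfun ρ Y (c • Z) / c) := by field_simp
      _ ≤ c * pfun ρ Y Z := mul_le_mul_of_nonneg_left h3 hc.le
  · apply le_ciInf
    rintro ⟨t, ht⟩
    rw [key t ht]
    exact mul_le_mul_of_nonneg_left
      (pfun_le_slopeQ hconv Y Z (t := t * c) (by positivity)) hc.le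

include hconv in
lemma pfun_add (Y Z₁ Z₂ : BM Ω) :
    pfun ρ Y (Z₁ + Z₂) ≤ pfun ρ Y Z₁ + pfun ρ Y Z₂ := by
  refine le_of_forall_pos_le_add ?_
  intro ε hε
  obtain ⟨⟨t₁, ht₁⟩, h1⟩ : ∃ t : {t : ℝ // 0 < t}, slopeQ ρ Y Z₁ t.1 < pfun ρ Y Z₁ + ε/2 :=
    exists_lt_of_ciInf_lt (by unfold pfun; linarith [lt_add_of_pos_right (pfun ρ Y Z₁) (by positivity : (0:ℝ) < ε/2)])
  obtain ⟨⟨t₂, ht₂⟩, h2⟩ : ∃ t : {t : ℝ // 0 < t}, slopeQ ρ Y Z₂ t.1 < pfun ρ Y Z₂ + ε/2 :=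
    exists_lt_of_ciInf_lt (by unfold pfun; linarith [lt_add_of_pos_right (pfun ρ Y Z₂) (by positivity : (0:ℝ) < ε/2)])
  obtain ⟨t, ht, h2t1, h2t2⟩ : ∃ t : ℝ, 0 < t ∧ 2 * t ≤ t₁ ∧ 2 * t ≤ t₂ :=
    ⟨min t₁ t₂ / 2, by positivity,
      by have := min_le_left t₁ t₂; linarith,
      by have := min_le_right t₁ t₂; linarith⟩
  have hid : (1/2 : ℝ) • (Y + (2*t) • Z₁) + (1 - 1/2 : ℝ) • (Y + (2*t) • Z₂)
      = Y + t • (Z₁ + Z₂) := by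
    apply Subtype.ext
    show (1/2 : ℝ) • ((Y : Ω → ℝ) + (2*t) • (Z₁ : Ω → ℝ))
        + (1 - 1/2 : ℝ) • ((Y : Ω → ℝ) + (2*t) • (Z₂ : Ω → ℝ))
        = (Y : Ω → ℝ) + t • ((Z₁ : Ω → ℝ) + (Z₂ : Ω → ℝ))
    funext ω
    simp only [Pi.add_apply, Pi.smul_apply, smul_eq_mul]
    ring
  have hconv2 := hconv (Y + (2*t) • Z₁) (Y + (2*t) • Z₂) (1/2) (by norm_num) (by norm_num)
  rw [hid] at hconv2
  have hkey : slopeQ ρ Y (Z₁ + Z₂) t ≤ slopeQ ρ Y Z₁ (2*t) + slopeQ ρ Y Z₂ (2*t) := by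
    unfold slopeQ
    rw [← add_div, div_le_div_iff₀ ht (by positivity : (0:ℝ) < 2*t)]
    nlinarith [mul_le_mul_of_nonneg_right hconv2 (by positivity : (0:ℝ) ≤ 2*t)]
  calc pfun ρ Y (Z₁ + Z₂) ≤ slopeQ ρ Y (Z₁ + Z₂) t := pfun_le_slopeQ hconv Y _ ht
    _ ≤ slopeQ ρ Y Z₁ (2*t) + slopeQ ρ Y Z₂ (2*t) := hkey
    _ ≤ slopeQ ρ Y Z₁ t₁ + slopeQ ρ Y Z₂ t₂ := by
        gcongr <;> [exact slopeQ_mono hconv Y Z₁ (by positivity) h2t1;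
          exact slopeQ_mono hconv Y Z₂ (by positivity) h2t2]
    _ ≤ pfun ρ Y Z₁ + ε/2 + (pfun ρ Y Z₂ + ε/2) := by linarith
    _ = pfun ρ Y Z₁ + pfun ρ Y Z₂ + ε := by ring

include hconv in
lemma exists_subgrad_lin (Y : BM Ω) :
    ∃ g : BM Ω →ₗ[ℝ] ℝ, ∀ Z, g Z ≤ ρ (Y + Z) - ρ Y := by
  have hf : ∀ x : ((⊥ : Submodule ℝ (BM Ω)) : Set (BM Ω)), True := fun _ => trivial
  obtain ⟨g, -, hg⟩ := exists_extension_of_le_sublinear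
    ⟨(⊥ : Submodule ℝ (BM Ω)), 0⟩ (pfun ρ Y)
    (fun c hc x => pfun_smul hconv Y x hc)
    (fun x y => pfun_add hconv Y x y)
    (by
      rintro ⟨x, hx⟩
      have : x = 0 := by simpa using hx
      simp [this, pfun_zero])
  exact ⟨g, fun Z => (hg Z).trans (pfun_le hconv Y Z)⟩
lemma indBM_of_mem {A : Set Ω} (hA : MeasurableSet A) {ω : Ω} (h : ω ∈ A) :
    (indBM A hA : Ω → ℝ) ω = 1 := by
  rw [show ((indBM A hA : Ω → ℝ)) = A.indicator (fun _ => (1:ℝ)) from rfl]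
  exact Set.indicator_of_mem h _

lemma indBM_of_not_mem {A : Set Ω} (hA : MeasurableSet A) {ω : Ω} (h : ω ∉ A) :
    (indBM A hA : Ω → ℝ) ω = 0 := by
  rw [show ((indBM A hA : Ω → ℝ)) = A.indicator (fun _ => (1:ℝ)) from rfl]
  exact Set.indicator_of_notMem h _

lemma indBM_nonneg (A : Set Ω) (hA : MeasurableSet A) (ω : Ω) :
    0 ≤ (indBM A hA : Ω → ℝ) ω := by
  by_cases h : ω ∈ A
  · rw [indBM_of_mem hA h]; norm_num
  · rw [indBM_of_not_mem hA h]

section Meas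

variable (hmono : ∀ X Y : BM Ω, X ≤ Y → ρ X ≤ ρ Y)
variable (hca : ∀ (X : ℕ → BM Ω) (Y : BM Ω),
      (∀ n m : ℕ, n ≤ m → X m ≤ X n) →
      (∀ ω, Filter.Tendsto (fun n => (X n : Ω → ℝ) ω) Filter.atTop (nhds ((Y : Ω → ℝ) ω))) →
      Filter.Tendsto (fun n => ρ (X n)) Filter.atTop (nhds (ρ Y)))
variable (g : BM Ω →ₗ[ℝ] ℝ) (Y : BM Ω) (hg : ∀ Z, g Z ≤ ρ (Y + Z) - ρ Y)

include hmono hg in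
lemma g_nonneg (Z : BM Ω) (hZ : ∀ ω, 0 ≤ (Z : Ω → ℝ) ω) : 0 ≤ g Z := by
  have h1 := hg (-Z)
  have h2 : ρ (Y + -Z) ≤ ρ Y := by
    apply hmono
    rw [BM.le_iff]
    intro ω
    have he : ((Y + -Z : BM Ω) : Ω → ℝ) ω = (Y : Ω → ℝ) ω - (Z : Ω → ℝ) ω := by
      simp; ring
    rw [he]
    linarith [hZ ω]
  rw [map_neg] at h1
  linarith

include hmono hca hg in
lemma g_ind_tendsto (A : ℕ → Set Ω) (hA : ∀ k, MeasurableSet (A k))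
    (hanti : ∀ k l, k ≤ l → A l ⊆ A k) (hempty : (⋂ k, A k) = ∅) :
    Filter.Tendsto (fun k => g (indBM (A k) (hA k))) Filter.atTop (nhds 0) := by
  have hub : ∀ k, g (indBM (A k) (hA k)) ≤ ρ (Y + indBM (A k) (hA k)) - ρ Y :=
    fun k => hg _
  have hlb : ∀ k, 0 ≤ g (indBM (A k) (hA k)) :=
    fun k => g_nonneg hmono g Y hg _ (indBM_nonneg _ _)
  have hdec : ∀ n m : ℕ, n ≤ m →
      (Y + indBM (A m) (hA m)) ≤ (Y + indBM (A n) (hA n)) := by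
    intro n m hnm
    rw [BM.le_iff]
    intro ω
    have h1 : ((Y + indBM (A m) (hA m) : BM Ω) : Ω → ℝ) ω
        = (Y : Ω → ℝ) ω + (indBM (A m) (hA m) : Ω → ℝ) ω := by simp
    have h2 : ((Y + indBM (A n) (hA n) : BM Ω) : Ω → ℝ) ω
        = (Y : Ω → ℝ) ω + (indBM (A n) (hA n) : Ω → ℝ) ω := by simp
    rw [h1, h2]
    have : (indBM (A m) (hA m) : Ω → ℝ) ω ≤ (indBM (A n) (hA n) : Ω → ℝ) ω := by
      by_cases h : ω ∈ A m
      · rw [indBM_of_mem (hA m) h, indBM_of_mem (hA n) (hanti n m hnm h)]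
      · rw [indBM_of_not_mem (hA m) h]
        exact indBM_nonneg _ _ _
    linarith
  have hpt : ∀ ω, Filter.Tendsto
      (fun k => ((Y + indBM (A k) (hA k) : BM Ω) : Ω → ℝ) ω) Filter.atTop
      (nhds ((Y : Ω → ℝ) ω)) := by
    intro ω
    have hω : ∃ k₀, ω ∉ A k₀ := by
      by_contra hcon
      push_neg at hcon
      have : ω ∈ ⋂ k, A k := Set.mem_iInter.mpr hcon
      rw [hempty] at this
      exact absurd this (Set.notMem_empty ω)
    obtain ⟨k₀, hk₀⟩ := hω
    apply Filter.Tendsto.congr' _ tendsto_const_nhds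
    filter_upwards [Filter.eventually_ge_atTop k₀] with k hk
    have hωk : ω ∉ A k := fun h => hk₀ (hanti k₀ k hk h)
    have : ((Y + indBM (A k) (hA k) : BM Ω) : Ω → ℝ) ω
        = (Y : Ω → ℝ) ω + (indBM (A k) (hA k) : Ω → ℝ) ω := by simp
    rw [this, indBM_of_not_mem (hA k) hωk, add_zero]
  have hρ := hca (fun k => Y + indBM (A k) (hA k)) Y hdec hpt
  have hupper : Filter.Tendsto (fun k => ρ (Y + indBM (A k) (hA k)) - ρ Y)
      Filter.atTop (nhds 0) := by
    have := hρ.sub_const (ρ Y)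
    simpa using this
  exact squeeze_zero hlb hub hupper
include hmono hca hg in
lemma exists_measure : ∃ μ : Measure Ω,
    ∀ A : Set Ω, ∀ hA : MeasurableSet A, μ A = ENNReal.ofReal (g (indBM A hA)) := by
  classical
  have hgind_nonneg : ∀ (A : Set Ω) (hA : MeasurableSet A), 0 ≤ g (indBM A hA) :=
    fun A hA => g_nonneg hmono g Y hg _ (indBM_nonneg _ _)
  refine ⟨Measure.ofMeasurable (fun A hA => ENNReal.ofReal (g (indBM A hA))) ?_ ?_,
    fun A hA => Measure.ofMeasurable_apply A hA⟩
  · have h0 : indBM (∅ : Set Ω) MeasurableSet.empty = (0 : BM Ω) := by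
      apply Subtype.ext
      funext ω
      rw [indBM_of_not_mem MeasurableSet.empty (Set.notMem_empty ω)]
      rfl
    show ENNReal.ofReal (g (indBM ∅ MeasurableSet.empty)) = 0
    rw [h0, map_zero, ENNReal.ofReal_zero]
  · intro f hf hd
    -- tail sets
    set S : ℕ → Set Ω := fun n => ⋃ (i : ℕ) (_ : n ≤ i), f i with hSdef
    have hS : ∀ n, MeasurableSet (S n) :=
      fun n => MeasurableSet.iUnion fun i => MeasurableSet.iUnion fun _ => hf i
    have hSanti : ∀ k l : ℕ, k ≤ l → S l ⊆ S k := by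
      intro k l hkl ω hω
      simp only [hSdef, Set.mem_iUnion] at hω ⊢
      obtain ⟨i, hi, hωi⟩ := hω
      exact ⟨i, hkl.trans hi, hωi⟩
    have hSempty : (⋂ n, S n) = ∅ := by
      ext ω
      simp only [Set.mem_iInter, Set.mem_empty_iff_false, iff_false]
      intro hcon
      have h0 := hcon 0
      simp only [hSdef, Set.mem_iUnion] at h0
      obtain ⟨j, -, hj⟩ := h0
      have hj1 := hcon (j + 1)
      simp only [hSdef, Set.mem_iUnion] at hj1
      obtain ⟨i, hi, hωi⟩ := hj1
      have hne : i ≠ j := by omega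
      exact absurd (Set.mem_inter hωi hj)
        (Set.disjoint_iff_inter_eq_empty.mp (hd hne) ▸ Set.notMem_empty ω)
    have hU : MeasurableSet (⋃ i, f i) := MeasurableSet.iUnion hf
    -- decomposition
    have hdecomp : ∀ n : ℕ, indBM (⋃ i, f i) hU
        = (∑ i ∈ Finset.range n, indBM (f i) (hf i)) + indBM (S n) (hS n) := by
      intro n
      apply Subtype.ext
      funext ω
      have hcoe : ((∑ i ∈ Finset.range n, indBM (f i) (hf i)) + indBM (S n) (hS n) :
          BM Ω).1 ω = (∑ i ∈ Finset.range n, (indBM (f i) (hf i) : Ω → ℝ) ω)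
            + (indBM (S n) (hS n) : Ω → ℝ) ω := by
        simp
      rw [hcoe]
      by_cases hω : ω ∈ ⋃ i, f i
      · rw [Set.mem_iUnion] at hω
        obtain ⟨j, hj⟩ := hω
        have huniq : ∀ i, i ≠ j → ω ∉ f i := by
          intro i hi hcon
          exact absurd (Set.mem_inter hcon hj)
            (Set.disjoint_iff_inter_eq_empty.mp (hd hi) ▸ Set.notMem_empty ω)
        rw [indBM_of_mem hU (Set.mem_iUnion.mpr ⟨j, hj⟩)]
        by_cases hjn : j < n
        · have hsum : (∑ i ∈ Finset.range n, (indBM (f i) (hf i) : Ω → ℝ) ω) = 1 := by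
            rw [Finset.sum_eq_single j]
            · exact indBM_of_mem (hf j) hj
            · intro i _ hij
              exact indBM_of_not_mem (hf i) (huniq i hij)
            · intro hcon
              exact absurd (Finset.mem_range.mpr hjn) hcon
          have hSn : ω ∉ S n := by
            intro hcon
            simp only [hSdef, Set.mem_iUnion] at hcon
            obtain ⟨i, hi, hωi⟩ := hcon
            exact huniq i (by omega) hωi
          rw [hsum, indBM_of_not_mem (hS n) hSn, add_zero]
        · have hsum : (∑ i ∈ Finset.range n, (indBM (f i) (hf i) : Ω → ℝ) ω) = 0 := by
            apply Finset.sum_eq_zero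
            intro i hi
            exact indBM_of_not_mem (hf i) (huniq i (by
              simp only [Finset.mem_range] at hi; omega))
          have hSn : ω ∈ S n := by
            simp only [hSdef, Set.mem_iUnion]
            exact ⟨j, by omega, hj⟩
          rw [hsum, indBM_of_mem (hS n) hSn, zero_add]
      · have h1 : ∀ i, ω ∉ f i := by
          intro i hcon; exact hω (Set.mem_iUnion.mpr ⟨i, hcon⟩)
        have hSn : ω ∉ S n := by
          intro hcon
          simp only [hSdef, Set.mem_iUnion] at hcon
          obtain ⟨i, -, hωi⟩ := hcon
          exact h1 i hωi
        rw [indBM_of_not_mem hU hω, indBM_of_not_mem (hS n) hSn,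
          Finset.sum_eq_zero (fun i _ => indBM_of_not_mem (hf i) (h1 i)), add_zero]
    have hgdecomp : ∀ n : ℕ, (∑ i ∈ Finset.range n, g (indBM (f i) (hf i)))
        = g (indBM (⋃ i, f i) hU) - g (indBM (S n) (hS n)) := by
      intro n
      rw [hdecomp n, map_add, map_sum]
      ring
    have htail := g_ind_tendsto hmono hca g Y hg S hS hSanti hSempty
    have hpartial : Filter.Tendsto (fun n => ∑ i ∈ Finset.range n, g (indBM (f i) (hf i)))
        Filter.atTop (nhds (g (indBM (⋃ i, f i) hU))) := by
      simp only [hgdecomp]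
      have := (tendsto_const_nhds (x := g (indBM (⋃ i, f i) hU))
        (f := Filter.atTop (α := ℕ))).sub htail
      simpa using this
    have hhs : HasSum (fun i => g (indBM (f i) (hf i))) (g (indBM (⋃ i, f i) hU)) :=
      (hasSum_iff_tendsto_nat_of_nonneg (fun i => hgind_nonneg _ _) _).mpr hpartial
    show ENNReal.ofReal (g (indBM (⋃ i, f i) hU)) = ∑' i, ENNReal.ofReal (g (indBM (f i) (hf i)))
    rw [← hhs.tsum_eq, ENNReal.ofReal_tsum_of_nonneg (fun i => hgind_nonneg _ _) hhs.summable]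
include hmono hca hg in
lemma exists_repr_measure : ∃ μ : Measure Ω, IsFiniteMeasure μ ∧
    (∀ A : Set Ω, ∀ hA : MeasurableSet A, μ A = ENNReal.ofReal (g (indBM A hA))) ∧
    ∀ Z : BM Ω, ∫ ω, (Z : Ω → ℝ) ω ∂μ = g Z := by
  classical
  obtain ⟨μ, hμ⟩ := exists_measure hmono hca g Y hg
  have hgind_nonneg : ∀ (A : Set Ω) (hA : MeasurableSet A), 0 ≤ g (indBM A hA) :=
    fun A hA => g_nonneg hmono g Y hg _ (indBM_nonneg _ _)
  have hfin : IsFiniteMeasure μ := by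
    constructor
    rw [hμ Set.univ MeasurableSet.univ]
    exact ENNReal.ofReal_lt_top
  refine ⟨μ, hfin, hμ, ?_⟩
  intro Z
  obtain ⟨C, hC0, hC⟩ := BM.exists_bound Z
  -- dyadic approximants
  have key : ∀ k : ℕ, ∃ s : BM Ω, (∫ ω, (s : Ω → ℝ) ω ∂μ = g s) ∧
      ∀ ω, (s : Ω → ℝ) ω ≤ (Z : Ω → ℝ) ω ∧
        (Z : Ω → ℝ) ω - (s : Ω → ℝ) ω ≤ 1 / 2 ^ k := by
    intro k
    set d : ℝ := 2 ^ k with hddef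
    have hd : (0:ℝ) < d := by positivity
    set B : ℤ → Set Ω := fun j => (fun ω => ⌊d * (Z : Ω → ℝ) ω⌋) ⁻¹' {j} with hBdef
    have hB : ∀ j, MeasurableSet (B j) :=
      fun j => ((measurable_const.mul (BM.measurable' Z)).floor) (measurableSet_singleton j)
    set N : ℤ := ⌈d * C⌉ with hNdef
    set T : Finset ℤ := Finset.Icc (-(N + 1)) (N + 1) with hTdef
    have hmemT : ∀ ω, ⌊d * (Z : Ω → ℝ) ω⌋ ∈ T := by
      intro ω
      have h1 : d * (Z : Ω → ℝ) ω ≤ d * C :=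
        mul_le_mul_of_nonneg_left ((abs_le.mp (hC ω)).2) hd.le
      have h2 : -(d * C) ≤ d * (Z : Ω → ℝ) ω := by
        have := mul_le_mul_of_nonneg_left ((abs_le.mp (hC ω)).1) hd.le
        linarith
      rw [hTdef, Finset.mem_Icc]
      refine ⟨Int.le_floor.mpr ?_, ?_⟩
      · push_cast
        have hN : d * C ≤ (N : ℝ) := Int.le_ceil _
        linarith
      · have hf1 : (⌊d * (Z : Ω → ℝ) ω⌋ : ℝ) ≤ d * C := le_trans (Int.floor_le _) h1
        have hN : d * C ≤ (N : ℝ) := Int.le_ceil _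
        have hf2 : (⌊d * (Z : Ω → ℝ) ω⌋ : ℝ) ≤ ((N + 1 : ℤ) : ℝ) := by push_cast; linarith
        exact_mod_cast hf2
    refine ⟨∑ j ∈ T, ((j : ℝ) / d) • indBM (B j) (hB j), ?_, ?_⟩
    · -- integral equals g on this simple element
      have hint : ∀ j : ℤ, ∫ ω, ((((j : ℝ) / d) • indBM (B j) (hB j) : BM Ω) : Ω → ℝ) ω ∂μ
          = ((j : ℝ) / d) * g (indBM (B j) (hB j)) := by
        intro j
        have hcoe : (((((j : ℝ) / d) • indBM (B j) (hB j) : BM Ω)) : Ω → ℝ)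
            = fun ω => ((j : ℝ) / d) * (indBM (B j) (hB j) : Ω → ℝ) ω := by
          funext ω; simp
        rw [hcoe]
        rw [MeasureTheory.integral_const_mul]
        congr 1
        have : ∫ ω, (indBM (B j) (hB j) : Ω → ℝ) ω ∂μ
            = (μ (B j)).toReal • (1:ℝ) := by
          exact MeasureTheory.integral_indicator_const (1:ℝ) (hB j)
        rw [this, hμ (B j) (hB j), ENNReal.toReal_ofReal (hgind_nonneg _ _), smul_eq_mul,
          mul_one]
      have hcoesum : ((∑ j ∈ T, ((j : ℝ) / d) • indBM (B j) (hB j) : BM Ω) : Ω → ℝ)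
          = fun ω => ∑ j ∈ T, ((((j : ℝ) / d) • indBM (B j) (hB j) : BM Ω) : Ω → ℝ) ω := by
        funext ω
        simp
      rw [hcoesum]
      rw [MeasureTheory.integral_finset_sum _ (fun j _ => BM.integrable _ μ)]
      rw [map_sum]
      congr 1
      funext j
      rw [hint j, LinearMap.map_smul, smul_eq_mul]
    · -- pointwise bounds
      intro ω
      have hval : ((∑ j ∈ T, ((j : ℝ) / d) • indBM (B j) (hB j) : BM Ω) : Ω → ℝ) ω
          = (⌊d * (Z : Ω → ℝ) ω⌋ : ℝ) / d := by
        have hcoe : ((∑ j ∈ T, ((j : ℝ) / d) • indBM (B j) (hB j) : BM Ω) : Ω → ℝ) ω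
            = ∑ j ∈ T, ((j : ℝ) / d) * (indBM (B j) (hB j) : Ω → ℝ) ω := by
          simp
        rw [hcoe]
        rw [Finset.sum_eq_single (⌊d * (Z : Ω → ℝ) ω⌋)]
        · rw [indBM_of_mem (hB _) (show ω ∈ B ⌊d * (Z : Ω → ℝ) ω⌋ from rfl), mul_one]
        · intro j _ hj
          rw [indBM_of_not_mem (hB j) (fun h => absurd
            (show ⌊d * (Z : Ω → ℝ) ω⌋ = j from h) (fun he => hj he.symm)), mul_zero]
        · intro hcon
          exact absurd (hmemT ω) hcon
      rw [hval]
      constructor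
      · rw [div_le_iff₀ hd]
        calc (⌊d * (Z : Ω → ℝ) ω⌋ : ℝ) ≤ d * (Z : Ω → ℝ) ω := Int.floor_le _
          _ = (Z : Ω → ℝ) ω * d := by ring
      · have h1 : d * (Z : Ω → ℝ) ω - 1 ≤ (⌊d * (Z : Ω → ℝ) ω⌋ : ℝ) := by
          linarith [Int.lt_floor_add_one (d * (Z : Ω → ℝ) ω)]
        have h2 : (1:ℝ)/2^k = 1/d := by rw [hddef]
        rw [h2, sub_le_iff_le_add, ← add_div, le_div_iff₀ hd, mul_comm]
        linarith
      -- done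
  -- squeeze
  have gmono : ∀ W₁ W₂ : BM Ω, (∀ ω, (W₁ : Ω → ℝ) ω ≤ (W₂ : Ω → ℝ) ω) → g W₁ ≤ g W₂ := by
    intro W₁ W₂ h
    have := g_nonneg hmono g Y hg (W₂ - W₁) (fun ω => by
      have he : ((W₂ - W₁ : BM Ω) : Ω → ℝ) ω = (W₂ : Ω → ℝ) ω - (W₁ : Ω → ℝ) ω := by simp
      rw [he]; linarith [h ω])
    rw [map_sub] at this
    linarith
  have habs : ∀ k : ℕ, |∫ ω, (Z : Ω → ℝ) ω ∂μ - g Z|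
      ≤ (1/2^k) * ((μ Set.univ).toReal + g (constBM 1)) := by
    intro k
    obtain ⟨s, hsint, hsbound⟩ := key k
    have hZs_int : Integrable (fun ω => (Z : Ω → ℝ) ω - (s : Ω → ℝ) ω) μ :=
      (BM.integrable Z μ).sub (BM.integrable s μ)
    have hint_diff : ∫ ω, ((Z : Ω → ℝ) ω - (s : Ω → ℝ) ω) ∂μ
        = ∫ ω, (Z : Ω → ℝ) ω ∂μ - ∫ ω, (s : Ω → ℝ) ω ∂μ :=
      MeasureTheory.integral_sub (BM.integrable Z μ) (BM.integrable s μ)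
    have hd1 : 0 ≤ ∫ ω, ((Z : Ω → ℝ) ω - (s : Ω → ℝ) ω) ∂μ :=
      MeasureTheory.integral_nonneg (by
        intro ω
        simp only [Pi.zero_apply]
        linarith [(hsbound ω).1])
    have hd2 : ∫ ω, ((Z : Ω → ℝ) ω - (s : Ω → ℝ) ω) ∂μ ≤ (1/2^k) * (μ Set.univ).toReal := by
      calc ∫ ω, ((Z : Ω → ℝ) ω - (s : Ω → ℝ) ω) ∂μ
          ≤ ∫ _, (1/2^k : ℝ) ∂μ := by
            apply MeasureTheory.integral_mono hZs_int (integrable_const _)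
            intro ω
            exact (hsbound ω).2
        _ = (1/2^k) * (μ Set.univ).toReal := by
            rw [MeasureTheory.integral_const, smul_eq_mul, mul_comm]; rfl
    have hg1 : 0 ≤ g Z - g s := by
      have := g_nonneg hmono g Y hg (Z - s) (by
        intro ω
        have : ((Z - s : BM Ω) : Ω → ℝ) ω = (Z : Ω → ℝ) ω - (s : Ω → ℝ) ω := by simp
        rw [this]; linarith [(hsbound ω).1])
      rw [map_sub] at this
      linarith
    have hg2 : g Z - g s ≤ (1/2^k) * g (constBM 1) := by
      have h1 : g (Z - s) ≤ g ((1/2^k : ℝ) • constBM 1) := by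
        apply gmono
        intro ω
        have h2 : ((Z - s : BM Ω) : Ω → ℝ) ω = (Z : Ω → ℝ) ω - (s : Ω → ℝ) ω := by simp
        have h3 : (((1/2^k : ℝ) • constBM 1 : BM Ω) : Ω → ℝ) ω = 1/2^k := by
          simp [constBM]
        rw [h2, h3]
        exact (hsbound ω).2
      rw [map_sub, LinearMap.map_smul, smul_eq_mul] at h1
      linarith
    have heq : ∫ ω, (Z : Ω → ℝ) ω ∂μ - g Z
        = (∫ ω, ((Z : Ω → ℝ) ω - (s : Ω → ℝ) ω) ∂μ) - (g Z - g s) := by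
      rw [hint_diff, hsint]; ring
    rw [heq]
    rw [abs_le]
    constructor <;> nlinarith [ENNReal.toReal_nonneg (a := μ Set.univ),
      g_nonneg hmono g Y hg (constBM 1) (fun ω => by norm_num [constBM])]
  have hlim : Filter.Tendsto (fun k : ℕ => (1/2^k : ℝ) * ((μ Set.univ).toReal + g (constBM 1)))
      Filter.atTop (nhds 0) := by
    have h2 : Filter.Tendsto (fun k : ℕ => ((1/2 : ℝ))^k) Filter.atTop (nhds 0) :=
      tendsto_pow_atTop_nhds_zero_of_lt_one (by norm_num) (by norm_num)
    have h4 : Filter.Tendsto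
        (fun k : ℕ => ((1/2 : ℝ))^k * ((μ Set.univ).toReal + g (constBM 1)))
        Filter.atTop (nhds 0) := by simpa using h2.mul_const _
    exact h4.congr (fun k => by rw [div_pow, one_pow])
  have h0 : |∫ ω, (Z : Ω → ℝ) ω ∂μ - g Z| ≤ 0 :=
    ge_of_tendsto' hlim (fun k => habs k)
  have h1 := abs_nonpos_iff.mp h0
  linarith [sub_eq_zero.mp h1, le_of_eq (sub_eq_zero.mp h1)]
end Meas

variable (hmono : ∀ X Y : BM Ω, X ≤ Y → ρ X ≤ ρ Y)
variable (hca : ∀ (X : ℕ → BM Ω) (Y : BM Ω),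
      (∀ n m : ℕ, n ≤ m → X m ≤ X n) →
      (∀ ω, Filter.Tendsto (fun n => (X n : Ω → ℝ) ω) Filter.atTop (nhds ((Y : Ω → ℝ) ω))) →
      Filter.Tendsto (fun n => ρ (X n)) Filter.atTop (nhds (ρ Y)))

include hconv hmono hca in
lemma exists_subgrad (Y : BM Ω) : ∃ μ : Measure Ω, IsFiniteMeasure μ ∧
    rstarM ρ μ = ((∫ ω, (Y : Ω → ℝ) ω ∂μ - ρ Y : ℝ) : EReal) := by
  obtain ⟨g, hg⟩ := exists_subgrad_lin hconv Y
  obtain ⟨μ, hfin, hμA, hint⟩ := exists_repr_measure hmono hca g Y hg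
  refine ⟨μ, hfin, ?_⟩
  have hgY : ∫ ω, (Y : Ω → ℝ) ω ∂μ = g Y := hint Y
  apply le_antisymm
  · apply iSup_le
    intro Z
    rw [hint Z, hgY, EReal.coe_le_coe_iff]
    have h1 : g Z - g Y ≤ ρ Z - ρ Y := by
      have h2 := hg (Z - Y)
      rw [map_sub] at h2
      have he : Y + (Z - Y) = Z := by abel
      rw [he] at h2
      linarith
    linarith
  · exact le_iSup (fun Z : BM Ω => ((∫ ω, (Z : Ω → ℝ) ω ∂μ - ρ Z : ℝ) : EReal)) Y

variable (hnorm : ρ 0 = 0)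

include hnorm in
lemma rstarM_nonneg (ν : Measure Ω) : (0 : EReal) ≤ rstarM ρ ν := by
  have h := le_iSup (fun Z : BM Ω => ((∫ ω, (Z : Ω → ℝ) ω ∂ν - ρ Z : ℝ) : EReal)) (0 : BM Ω)
  have he : (((0 : BM Ω) : Ω → ℝ)) = fun _ => (0:ℝ) := by
    funext ω; simp
  rw [show (∫ ω, ((0 : BM Ω) : Ω → ℝ) ω ∂ν) = 0 by rw [he]; simp] at h
  rw [hnorm] at h
  simp only [sub_zero, EReal.coe_zero] at h
  exact h

lemma integral_constBM (c : ℝ) (μ : Measure Ω) :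
    ∫ ω, ((constBM c : BM Ω) : Ω → ℝ) ω ∂μ = c * (μ Set.univ).toReal := by
  rw [show (((constBM c : BM Ω) : Ω → ℝ)) = fun _ => c from rfl]
  rw [MeasureTheory.integral_const, smul_eq_mul, mul_comm]; rfl

lemma truncBM_le_m (X : Ω → ℝ) (hX : Measurable X) (n m : ℕ) (ω : Ω) :
    (truncBM X hX n m : Ω → ℝ) ω ≤ (m : ℝ) := by
  rw [show ((truncBM X hX n m : Ω → ℝ) ω) = max (-(n:ℝ)) (min (X ω) (m:ℝ)) from rfl]
  apply max_le
  · have : (0:ℝ) ≤ n := Nat.cast_nonneg n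
    have : (0:ℝ) ≤ m := Nat.cast_nonneg m
    linarith
  · exact min_le_right _ _

lemma truncBM_ge_min (X : Ω → ℝ) (hX : Measurable X) (n m : ℕ) (ω : Ω) :
    min (X ω) (m : ℝ) ≤ (truncBM X hX n m : Ω → ℝ) ω :=
  le_max_right _ _

lemma truncBM_anti (X : Ω → ℝ) (hX : Measurable X) {n n' : ℕ} (h : n ≤ n') (m : ℕ) (ω : Ω) :
    (truncBM X hX n' m : Ω → ℝ) ω ≤ (truncBM X hX n m : Ω → ℝ) ω := by
  rw [show ((truncBM X hX n' m : Ω → ℝ) ω) = max (-(n':ℝ)) (min (X ω) (m:ℝ)) from rfl,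
    show ((truncBM X hX n m : Ω → ℝ) ω) = max (-(n:ℝ)) (min (X ω) (m:ℝ)) from rfl]
  apply max_le
  · refine le_trans ?_ (le_max_left _ _)
    have : (n:ℝ) ≤ (n':ℝ) := Nat.cast_le.mpr h
    linarith
  · exact le_max_right _ _

lemma min_ge_neg_abs (x : ℝ) (m : ℕ) : -|x| ≤ min x (m:ℝ) := by
  rcases le_total x (m:ℝ) with h | h
  · rw [min_eq_left h]; exact neg_abs_le x
  · rw [min_eq_right h]
    have : (0:ℝ) ≤ m := Nat.cast_nonneg m
    have := abs_nonneg x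
    linarith

lemma truncBM_abs_le (X : Ω → ℝ) (hX : Measurable X) (n m : ℕ) (ω : Ω) :
    |(truncBM X hX n m : Ω → ℝ) ω| ≤ |X ω| + m := by
  rw [abs_le]
  constructor
  · have h1 := min_ge_neg_abs (X ω) m
    have h2 := truncBM_ge_min X hX n m ω
    have : (0:ℝ) ≤ m := Nat.cast_nonneg m
    linarith
  · have h1 := truncBM_le_m X hX n m ω
    have := abs_nonneg (X ω)
    linarith

lemma truncBM_tendsto (X : Ω → ℝ) (hX : Measurable X) (m : ℕ) (ω : Ω) :
    Filter.Tendsto (fun n => (truncBM X hX n m : Ω → ℝ) ω) Filter.atTop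
      (nhds (min (X ω) (m:ℝ))) := by
  apply Filter.Tendsto.congr' _ tendsto_const_nhds
  filter_upwards [Filter.eventually_ge_atTop (⌈|X ω|⌉₊)] with n hn
  have h1 : |X ω| ≤ (n:ℝ) := le_trans (Nat.le_ceil _) (Nat.cast_le.mpr hn)
  have h2 : -(n:ℝ) ≤ min (X ω) (m:ℝ) := le_trans (by linarith [min_ge_neg_abs (X ω) m]) (le_refl _)
  rw [show ((truncBM X hX n m : Ω → ℝ) ω) = max (-(n:ℝ)) (min (X ω) (m:ℝ)) from rfl]
  exact (max_eq_right h2).symm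

lemma min_integrable {X : Ω → ℝ} (hX : Measurable X) {ν : Measure Ω}
    (hXi : Integrable X ν) (m : ℕ) : Integrable (fun ω => min (X ω) (m:ℝ)) ν := by
  apply hXi.abs.mono' ((hX.min measurable_const).aestronglyMeasurable)
  apply Filter.Eventually.of_forall
  intro ω
  rw [Real.norm_eq_abs, abs_le]
  constructor
  · have := min_ge_neg_abs (X ω) m
    linarith [abs_nonneg (X ω)]
  · exact le_trans (min_le_left _ _) (le_abs_self _)
end Slope

lemma dir_le {Ω : Type*} [MeasurableSpace Ω] (ρ : BM Ω → ℝ) (hnorm : ρ 0 = 0)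
    (X : Ω → ℝ) (hX : Measurable X) (ν : Measure Ω) [IsFiniteMeasure ν]
    (hν : rstarM ρ ν ≠ ⊤) (hXi : Integrable X ν) :
    (((∫ ω, X ω ∂ν : ℝ) : EReal)) - rstarM ρ ν
      ≤ ⨆ m : ℕ, ⨅ n : ℕ, ((ρ (truncBM X hX n m) : ℝ) : EReal) := by
  have h0 : (0 : EReal) ≤ rstarM ρ ν := rstarM_nonneg hnorm ν
  set r' := (rstarM ρ ν).toReal with hr'def
  have hbot : rstarM ρ ν ≠ ⊥ := by
    intro h
    rw [h] at h0
    exact absurd (le_bot_iff.mp h0) (by simp)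
  have hr : rstarM ρ ν = (r' : EReal) := (EReal.coe_toReal hν hbot).symm
  have hbound : ∀ Z : BM Ω, ∫ ω, (Z : Ω → ℝ) ω ∂ν - ρ Z ≤ r' := by
    intro Z
    have h := le_iSup (fun Z : BM Ω => ((∫ ω, (Z : Ω → ℝ) ω ∂ν - ρ Z : ℝ) : EReal)) Z
    rw [show (⨆ Z : BM Ω, ((∫ ω, (Z : Ω → ℝ) ω ∂ν - ρ Z : ℝ) : EReal)) = rstarM ρ ν
      from rfl, hr] at h
    exact EReal.coe_le_coe_iff.mp h
  set a : ℕ → ℝ := fun m => ∫ ω, min (X ω) (m : ℝ) ∂ν with hadef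
  have hstep : ∀ m : ℕ, ((a m - r' : ℝ) : EReal)
      ≤ ⨆ m' : ℕ, ⨅ n : ℕ, ((ρ (truncBM X hX n m') : ℝ) : EReal) := by
    intro m
    refine le_trans ?_ (le_iSup _ m)
    refine le_iInf ?_
    intro n
    rw [EReal.coe_le_coe_iff]
    have h1 := hbound (truncBM X hX n m)
    have h2 : a m ≤ ∫ ω, (truncBM X hX n m : Ω → ℝ) ω ∂ν :=
      MeasureTheory.integral_mono (min_integrable hX hXi m) (BM.integrable _ ν)
        (fun ω => truncBM_ge_min X hX n m ω)
    linarith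
  have htends : Filter.Tendsto a Filter.atTop (nhds (∫ ω, X ω ∂ν)) := by
    apply MeasureTheory.tendsto_integral_of_dominated_convergence (fun ω => |X ω|)
    · intro n; exact (hX.min measurable_const).aestronglyMeasurable
    · exact hXi.abs
    · intro n
      apply Filter.Eventually.of_forall
      intro ω
      rw [Real.norm_eq_abs, abs_le]
      constructor
      · linarith [min_ge_neg_abs (X ω) n, abs_nonneg (X ω)]
      · exact le_trans (min_le_left _ _) (le_abs_self _)
    · apply Filter.Eventually.of_forall
      intro ω
      apply Filter.Tendsto.congr' _ tendsto_const_nhds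
      filter_upwards [Filter.eventually_ge_atTop (⌈X ω⌉₊)] with mm hmm
      have h1 : X ω ≤ (mm : ℝ) := le_trans (Nat.le_ceil _) (Nat.cast_le.mpr hmm)
      exact (min_eq_left h1).symm
  have hlim2 : Filter.Tendsto (fun m => ((a m - r' : ℝ) : EReal)) Filter.atTop
      (nhds ((∫ ω, X ω ∂ν - r' : ℝ) : EReal)) :=
    EReal.tendsto_coe.mpr (htends.sub_const r')
  have hfin := le_of_tendsto' hlim2 hstep
  rw [hr, ← EReal.coe_sub]
  exact hfin

lemma dir_ge {Ω : Type*} [MeasurableSpace Ω] (ρ : BM Ω → ℝ)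
    (hconv : ∀ X Y : BM Ω, ∀ t : ℝ, 0 ≤ t → t ≤ 1 →
      ρ (t • X + (1 - t) • Y) ≤ t * ρ X + (1 - t) * ρ Y)
    (hmono : ∀ X Y : BM Ω, X ≤ Y → ρ X ≤ ρ Y)
    (hnorm : ρ 0 = 0)
    (hca : ∀ (X : ℕ → BM Ω) (Y : BM Ω),
      (∀ n m : ℕ, n ≤ m → X m ≤ X n) →
      (∀ ω, Filter.Tendsto (fun n => (X n : Ω → ℝ) ω) Filter.atTop (nhds ((Y : Ω → ℝ) ω))) →
      Filter.Tendsto (fun n => ρ (X n)) Filter.atTop (nhds (ρ Y)))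
    (hdomfin : ∀ ν : Measure Ω, rstarM ρ ν ≠ ⊤ → IsFiniteMeasure ν)
    (hcomp : ∀ c : ℝ,
      IsCompact (weakEmbed '' {ν : Measure Ω | rstarM ρ ν ≤ (c : EReal)}))
    (X : Ω → ℝ) (hX : Measurable X)
    (hXint : ∀ ν : Measure Ω, rstarM ρ ν ≠ ⊤ → Integrable X ν)
    (m : ℕ) :
    (⨅ n : ℕ, ((ρ (truncBM X hX n m) : ℝ) : EReal)) ≤ rhoTilde ρ X := by
  classical
  by_cases hbotcase : (⨅ n : ℕ, ((ρ (truncBM X hX n m) : ℝ) : EReal)) = ⊥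
  · rw [hbotcase]; exact bot_le
  have hinftop : (⨅ n : ℕ, ((ρ (truncBM X hX n m) : ℝ) : EReal)) ≠ ⊤ := by
    intro hcontra
    have h := iInf_le (fun n : ℕ => ((ρ (truncBM X hX n m) : ℝ) : EReal)) 0
    rw [hcontra] at h
    exact absurd h (not_le.mpr (EReal.coe_lt_top _))
  set a' := (⨅ n : ℕ, ((ρ (truncBM X hX n m) : ℝ) : EReal)).toReal with ha'def
  have ha : (⨅ n : ℕ, ((ρ (truncBM X hX n m) : ℝ) : EReal)) = (a' : EReal) :=
    (EReal.coe_toReal hinftop hbotcase).symm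
  have ha' : ∀ n : ℕ, a' ≤ ρ (truncBM X hX n m) := by
    intro n
    have h := iInf_le (fun n : ℕ => ((ρ (truncBM X hX n m) : ℝ) : EReal)) n
    rw [ha] at h
    exact EReal.coe_le_coe_iff.mp h
  -- subgradient measures at each truncation
  choose μ hfinμ hrμ using fun n => exists_subgrad hconv hmono hca (truncBM X hX n m)
  have hboundn : ∀ n (Z : BM Ω), ∫ ω, (Z : Ω → ℝ) ω ∂(μ n) - ρ Z
      ≤ ∫ ω, (truncBM X hX n m : Ω → ℝ) ω ∂(μ n) - ρ (truncBM X hX n m) := by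
    intro n Z
    have h := le_iSup (fun Z : BM Ω => ((∫ ω, (Z : Ω → ℝ) ω ∂(μ n) - ρ Z : ℝ) : EReal)) Z
    rw [show (⨆ Z : BM Ω, ((∫ ω, (Z : Ω → ℝ) ω ∂(μ n) - ρ Z : ℝ) : EReal))
      = rstarM ρ (μ n) from rfl, hrμ n] at h
    exact EReal.coe_le_coe_iff.mp h
  set Cm : ℝ := ρ (constBM ((m : ℝ) + 1)) with hCmdef
  set c : ℝ := m * (Cm - a') - a' with hcdef
  -- uniform bound on the conjugate values
  have hRc : ∀ n, ∫ ω, (truncBM X hX n m : Ω → ℝ) ω ∂(μ n) - ρ (truncBM X hX n m) ≤ c := by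
    intro n
    haveI := hfinμ n
    have hMn : ((m : ℝ) + 1) * ((μ n) Set.univ).toReal - Cm
        ≤ ∫ ω, (truncBM X hX n m : Ω → ℝ) ω ∂(μ n) - ρ (truncBM X hX n m) := by
      have := hboundn n (constBM ((m : ℝ) + 1))
      rw [integral_constBM] at this
      linarith
    have hTm : ∫ ω, (truncBM X hX n m : Ω → ℝ) ω ∂(μ n)
        ≤ (m : ℝ) * ((μ n) Set.univ).toReal := by
      have h := MeasureTheory.integral_mono (BM.integrable _ (μ n))
        (BM.integrable (constBM (m : ℝ)) (μ n))
        (fun ω => truncBM_le_m X hX n m ω)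
      rw [integral_constBM] at h
      exact h
    have hR2 : ∫ ω, (truncBM X hX n m : Ω → ℝ) ω ∂(μ n) - ρ (truncBM X hX n m)
        ≤ (m : ℝ) * ((μ n) Set.univ).toReal - a' := by
      have := ha' n
      linarith
    have hMle : ((μ n) Set.univ).toReal ≤ Cm - a' := by linarith
    have hmm : (m : ℝ) * ((μ n) Set.univ).toReal ≤ (m : ℝ) * (Cm - a') :=
      mul_le_mul_of_nonneg_left hMle (Nat.cast_nonneg m)
    rw [hcdef]
    linarith
  -- compactness argument
  have hK := hcomp c
  set Cset : ℕ → Set (BM Ω → ℝ) := fun j =>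
    {φ | ∀ Z : BM Ω, φ Z - ρ Z ≤ φ (truncBM X hX j m) - a'} with hCsetdef
  have hCclosed : ∀ j, IsClosed (Cset j) := by
    intro j
    have he : Cset j = ⋂ Z : BM Ω,
        {φ : BM Ω → ℝ | φ Z - ρ Z ≤ φ (truncBM X hX j m) - a'} := by
      ext φ
      simp only [hCsetdef, Set.mem_iInter, Set.mem_setOf_eq]
    rw [he]
    exact isClosed_iInter fun Z => isClosed_le
      ((continuous_apply Z).sub continuous_const)
      ((continuous_apply _).sub continuous_const)
  set F : ℕ → Set (BM Ω → ℝ) := fun n =>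
    (weakEmbed '' {ν : Measure Ω | rstarM ρ ν ≤ (c : EReal)})
      ∩ ⋂ (j : ℕ) (_ : j ≤ n), Cset j with hFdef
  have hinterclosed : ∀ n : ℕ, IsClosed (⋂ (j : ℕ) (_ : j ≤ n), Cset j) :=
    fun n => isClosed_iInter fun j => isClosed_iInter fun _ => hCclosed j
  have hFclosed : ∀ n, IsClosed (F n) := fun n => hK.isClosed.inter (hinterclosed n)
  have hFcompact : IsCompact (F 0) := hK.inter_right (hinterclosed 0)
  have hFanti : ∀ n, F (n + 1) ⊆ F n := by
    intro n φ hφ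
    obtain ⟨h1, h2⟩ := hφ
    refine ⟨h1, ?_⟩
    simp only [Set.mem_iInter] at h2 ⊢
    intro j hj
    exact h2 j (hj.trans (Nat.le_succ n))
  have hFne : ∀ n, (F n).Nonempty := by
    intro n
    haveI := hfinμ n
    refine ⟨weakEmbed (μ n), ⟨μ n, ?_, rfl⟩, ?_⟩
    · show rstarM ρ (μ n) ≤ (c : EReal)
      rw [hrμ n]
      exact EReal.coe_le_coe_iff.mpr (hRc n)
    · simp only [Set.mem_iInter]
      intro j hj
      intro Z
      show ∫ ω, (Z : Ω → ℝ) ω ∂(μ n) - ρ Z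
        ≤ ∫ ω, (truncBM X hX j m : Ω → ℝ) ω ∂(μ n) - a'
      have h1 := hboundn n Z
      have h2 : ∫ ω, (truncBM X hX n m : Ω → ℝ) ω ∂(μ n)
          ≤ ∫ ω, (truncBM X hX j m : Ω → ℝ) ω ∂(μ n) :=
        MeasureTheory.integral_mono (BM.integrable _ (μ n)) (BM.integrable _ (μ n))
          (fun ω => truncBM_anti X hX hj m ω)
      have h3 := ha' n
      linarith
  obtain ⟨φ, hφ⟩ := IsCompact.nonempty_iInter_of_sequence_nonempty_isCompact_isClosed
    F hFanti hFne hFcompact hFclosed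
  rw [Set.mem_iInter] at hφ
  obtain ⟨⟨ν, hνmem, hνeq⟩, -⟩ := hφ 0
  have hνc : rstarM ρ ν ≤ (c : EReal) := hνmem
  have hνtop : rstarM ρ ν ≠ ⊤ := by
    intro h
    rw [h] at hνc
    exact absurd hνc (not_le.mpr (EReal.coe_lt_top c))
  haveI := hdomfin ν hνtop
  have hνbot : rstarM ρ ν ≠ ⊥ := by
    intro h
    have h0 := rstarM_nonneg hnorm ν
    rw [h] at h0
    exact absurd (le_bot_iff.mp h0) (by simp)
  set r' := (rstarM ρ ν).toReal with hr'def
  have hr : rstarM ρ ν = (r' : EReal) := (EReal.coe_toReal hνtop hνbot).symm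
  have hcond : ∀ n, a' + r' ≤ ∫ ω, (truncBM X hX n m : Ω → ℝ) ω ∂ν := by
    intro n
    have hφn := (hφ n).2
    simp only [Set.mem_iInter] at hφn
    have hc2 := hφn n (le_refl n)
    have hsup : rstarM ρ ν
        ≤ ((∫ ω, (truncBM X hX n m : Ω → ℝ) ω ∂ν - a' : ℝ) : EReal) := by
      apply iSup_le
      intro Z
      rw [EReal.coe_le_coe_iff]
      have h := hc2 Z
      rw [← hνeq] at h
      exact h
    rw [hr] at hsup
    have := EReal.coe_le_coe_iff.mp hsup
    linarith
  have hXiν := hXint ν hνtop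
  have htendsν : Filter.Tendsto (fun n => ∫ ω, (truncBM X hX n m : Ω → ℝ) ω ∂ν)
      Filter.atTop (nhds (∫ ω, min (X ω) (m : ℝ) ∂ν)) := by
    apply MeasureTheory.tendsto_integral_of_dominated_convergence (fun ω => |X ω| + m)
    · intro n; exact (BM.measurable' _).aestronglyMeasurable
    · exact hXiν.abs.add (integrable_const _)
    · intro n
      apply Filter.Eventually.of_forall
      intro ω
      rw [Real.norm_eq_abs]
      exact truncBM_abs_le X hX n m ω
    · apply Filter.Eventually.of_forall
      intro ω
      exact truncBM_tendsto X hX m ω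
  have hge : a' + r' ≤ ∫ ω, min (X ω) (m : ℝ) ∂ν :=
    ge_of_tendsto' htendsν (fun n => hcond n)
  have hminX : ∫ ω, min (X ω) (m : ℝ) ∂ν ≤ ∫ ω, X ω ∂ν :=
    MeasureTheory.integral_mono (min_integrable hX hXiν m) hXiν
      (fun ω => min_le_left _ _)
  rw [ha]
  refine le_trans ?_ (le_iSup₂_of_le ν hνtop (le_refl _))
  rw [hr, ← EReal.coe_sub]
  exact EReal.coe_le_coe_iff.mpr (by linarith)

theorem stmt15 (P : Measure Ω) [IsProbabilityMeasure P]
    (ρ : BM Ω → ℝ)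
    -- ρ is a normalised (finite) risk measure: convex, monotone, ρ(0) = 0
    (hconv : ∀ X Y : BM Ω, ∀ t : ℝ, 0 ≤ t → t ≤ 1 →
      ρ (t • X + (1 - t) • Y) ≤ t * ρ X + (1 - t) * ρ Y)
    (hmono : ∀ X Y : BM Ω, X ≤ Y → ρ X ≤ ρ Y)
    (hnorm : ρ 0 = 0)
    -- ρ is continuous from above, equivalently the level sets of ρ* are
    -- σ(ca_ℙ, L^∞_ℙ)-compact subsets of (ca_ℙ)₊
    (hca : ∀ (X : ℕ → BM Ω) (Y : BM Ω),
      (∀ n m : ℕ, n ≤ m → X m ≤ X n) →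
      (∀ ω, Filter.Tendsto (fun n => (X n : Ω → ℝ) ω) Filter.atTop (nhds ((Y : Ω → ℝ) ω))) →
      Filter.Tendsto (fun n => ρ (X n)) Filter.atTop (nhds (ρ Y)))
    (hdom : ∀ ν : Measure Ω, rstarM ρ ν ≠ ⊤ → ν ≪ P ∧ IsFiniteMeasure ν)
    (hcomp : ∀ c : ℝ,
      IsCompact (weakEmbed '' {ν : Measure Ω | rstarM ρ ν ≤ (c : EReal)})) :
    -- ρ̃ = ξ on the Minkowski domain L^R
    ∀ (X : Ω → ℝ) (hX : Measurable X),
      (∀ ν : Measure Ω, rstarM ρ ν ≠ ⊤ → Integrable X ν) →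
      rhoTilde ρ X = ⨆ m : ℕ, ⨅ n : ℕ, ((ρ (truncBM X hX n m) : ℝ) : EReal) := by
  intro X hX hXint
  apply le_antisymm
  · rw [rhoTilde]
    apply iSup₂_le
    intro ν hν
    haveI := (hdom ν hν).2
    exact dir_le ρ hnorm X hX ν hν (hXint ν hν)
  · apply iSup_le
    intro m
    exact dir_ge ρ hconv hmono hnorm hca (fun ν h => (hdom ν h).2) hcomp X hX hXint m
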